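/- arXiv:2503.17883 — 2 statements merged into one kernel-verified Lean document; each statement's English description precedes it below -/
import Mathlib

section
/- Let e ≥ 1 and n ≥ e+2 be integers. Then T(V_{n,e}) is isomorphic to the star K_{1,e} and T1(V_{n,e}) is isomorphic to K_2 ∨ eK_1; for every real λ ≥ ρ(T1(V_{n,e})) one has R_{V_{n,e}}(λ) = λ(λ+1)(λ² - λ - 2e)/(λ² - e); and the largest real root of λ² - λ - 2e equals ρ(T1(V_{n,e})). -/
open Polynomial Matrix

attribute [local instance] Classical.propDecidable

/-- The spectral radius of a finite simple graph: the largest modulus of a (real)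
eigenvalue of its adjacency matrix. -/
noncomputable def specRad {V : Type} [Fintype V] (G : SimpleGraph V) : ℝ :=
  sSup { r : ℝ | ∃ μ : ℝ, (∃ v : V → ℝ, v ≠ 0 ∧ (G.adjMatrix ℝ) *ᵥ v = μ • v) ∧ r = |μ| }

/-- The characteristic polynomial of the adjacency matrix of a graph. -/
noncomputable def gCharPoly {V : Type} [Fintype V] (G : SimpleGraph V) : Polynomial ℝ :=
  Matrix.charpoly (G.adjMatrix ℝ)

/-- `G` is a connected graph with `n` vertices and `n - 1 + e` edges. -/
def memC (n e : ℕ) (G : SimpleGraph (Fin n)) : Prop :=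
  G.Connected ∧ G.edgeSet.ncard = n - 1 + e

/-- `kk e` is the largest natural number `k` with `k * (k - 1) / 2 ≤ e`. -/
def kk (e : ℕ) : ℕ := Nat.findGreatest (fun k => k * (k - 1) ≤ 2 * e) (e + 2)

def tt (e : ℕ) : ℕ := e - kk e * (kk e - 1) / 2

def bb (e : ℕ) : ℕ := if e = 0 then 1 else if tt e = 0 then kk e + 1 else kk e + 2

/-- The graph `V_{n,e} = (K_{1,e} + (n-e-2)K_1) ∨ K_1` (vertices `0`-based: paper vertex `i`
is `i - 1` here): vertex `0` is adjacent to all other vertices, vertex `1` is additionally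
adjacent to vertices `2, …, e+1`, and there are no other edges. -/
def graphV (n e : ℕ) : SimpleGraph (Fin n) :=
  SimpleGraph.fromRel (fun i j => (i : ℕ) = 0 ∨ ((i : ℕ) = 1 ∧ 2 ≤ (j : ℕ) ∧ (j : ℕ) ≤ e + 1))

/-- The graph `D_{n,e}` (vertices `0`-based): vertex `0` is adjacent to all other vertices,
and for `1 ≤ i < j`, vertices `i` and `j` are adjacent iff `j ≤ kk e` or
(`j = kk e + 1` and `i ≤ tt e`).  For `n < kk e + 2` this is the complete graph. -/
def graphD (n e : ℕ) : SimpleGraph (Fin n) :=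
  SimpleGraph.fromRel (fun i j =>
    (i : ℕ) = 0 ∨ (1 ≤ (i : ℕ) ∧ (i : ℕ) < (j : ℕ) ∧
      ((j : ℕ) ≤ kk e ∨ ((j : ℕ) = kk e + 1 ∧ (i : ℕ) ≤ tt e))))

/-- A graph on `Fin n` whose adjacency matrix is stepwise (i.e. a threshold graph whose
vertices are already arranged in the canonical order). -/
def IsStepwise {n : ℕ} (G : SimpleGraph (Fin n)) : Prop :=
  ∀ i j k l : Fin n, G.Adj i j → i < j → k < l → k ≤ i → l ≤ j → G.Adj k l

/-- The (0-based) index of the last vertex of degree at least 2, i.e. the paper's `s - 1`. -/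
noncomputable def sIdx {n : ℕ} (G : SimpleGraph (Fin n)) : ℕ :=
  Nat.findGreatest (fun i => ∃ h : i < n, 2 ≤ (G.neighborSet ⟨i, h⟩).ncard) (n - 1)

/-- The T-subgraph `T(G)`: the subgraph of `G` induced on vertices `1, …, sIdx G`
(paper vertices `2, …, s`). -/
noncomputable def Tgraph {n : ℕ} (G : SimpleGraph (Fin n)) : SimpleGraph (Fin (sIdx G)) :=
  SimpleGraph.comap (fun i => (⟨(i : ℕ) + 1, by
    have h1 : (i : ℕ) < sIdx G := i.isLt
    have h2 : sIdx G ≤ n - 1 := by unfold sIdx; exact Nat.findGreatest_le _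
    omega⟩ : Fin n)) G

/-- The graph `T1(G) = T(G) ∨ K_1`: the subgraph of `G` induced on vertices
`0, 1, …, sIdx G` (paper vertices `1, …, s`). -/
noncomputable def T1graph {n : ℕ} (G : SimpleGraph (Fin n)) : SimpleGraph (Fin (sIdx G + 1)) :=
  if h : 0 < n then
    SimpleGraph.comap (fun i => (⟨(i : ℕ) % n, Nat.mod_lt _ h⟩ : Fin n)) G
  else ⊥

/-- The rational function `R_G(λ) = λ · P_{T1(G)}(λ) / P_{T(G)}(λ)`. -/
noncomputable def Rfun {n : ℕ} (G : SimpleGraph (Fin n)) : ℝ → ℝ :=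
  fun x => x * (gCharPoly (T1graph G)).eval x / (gCharPoly (Tgraph G)).eval x

/-- The polynomial `Q_{G1,G2}`. -/
noncomputable def Qpoly {n : ℕ} (G1 G2 : SimpleGraph (Fin n)) : Polynomial ℝ :=
  X * (gCharPoly (T1graph G1) * gCharPoly (Tgraph G2)
       - gCharPoly (T1graph G2) * gCharPoly (Tgraph G1))
  + C ((sIdx G1 : ℝ) - (sIdx G2 : ℝ)) * (gCharPoly (Tgraph G1) * gCharPoly (Tgraph G2))

/-- `r` is the largest real root of the polynomial `P`. -/
def IsGreatestRoot (P : Polynomial ℝ) (r : ℝ) : Prop :=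
  P.eval r = 0 ∧ ∀ x : ℝ, P.eval x = 0 → x ≤ r

/-- `r` is the largest real zero of the function `f`. -/
def IsGreatestZero (f : ℝ → ℝ) (r : ℝ) : Prop :=
  f r = 0 ∧ ∀ x : ℝ, f x = 0 → x ≤ r

/-- Disjoint union of two simple graphs. -/
def gSum {α β : Type} (G : SimpleGraph α) (H : SimpleGraph β) : SimpleGraph (α ⊕ β) where
  Adj x y := (∃ a b, x = Sum.inl a ∧ y = Sum.inl b ∧ G.Adj a b) ∨
             (∃ a b, x = Sum.inr a ∧ y = Sum.inr b ∧ H.Adj a b)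
  symm := by
    constructor
    rintro x y (⟨a, b, rfl, rfl, hab⟩ | ⟨a, b, rfl, rfl, hab⟩)
    · exact Or.inl ⟨b, a, rfl, rfl, hab.symm⟩
    · exact Or.inr ⟨b, a, rfl, rfl, hab.symm⟩
  loopless := by
    constructor
    rintro x (⟨a, b, rfl, hx, hab⟩ | ⟨a, b, rfl, hx, hab⟩)
    · obtain rfl := Sum.inl.inj hx; exact G.ne_of_adj hab rfl
    · obtain rfl := Sum.inr.inj hx; exact H.ne_of_adj hab rfl

/-- Join of two simple graphs: all cross edges are present. -/
def gJoin {α β : Type} (G : SimpleGraph α) (H : SimpleGraph β) : SimpleGraph (α ⊕ β) :=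
  (gSum Gᶜ Hᶜ)ᶜ

/-- The polynomial `Ψ_e`. -/
noncomputable def PsiPoly (e : ℕ) : Polynomial ℝ :=
  let k : ℝ := kk e
  let t : ℝ := tt e
  C ((k - 1) * (k - 2) * (k ^ 2 - 3 * k + 4 * t)) * X ^ 3
  - C (k ^ 5 - 6 * k ^ 4 + k ^ 3 * (4 * t + 15) - k ^ 2 * (20 * t + 18)
        + k * (8 * t ^ 2 + 24 * t + 8) - (4 * t ^ 2 + 12 * t)) * X ^ 2
  - C ((k ^ 2 - k + 2 * t) * (k ^ 3 + k ^ 2 * (t - 4) - k * (3 * t - 5)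
        + (4 * t ^ 2 - 2 * t - 2))) * X
  + C (t * (k - t - 1) * (k ^ 2 - 3 * k + 2 * t) * (k ^ 2 - k + 2 * t))

/-!
In `V_{n,e}` the vertices of degree at least two are the two hubs and the `e` neighbours of the
second hub, so `T(V_{n,e})` is the star `K_1 ∨ eK_1` and `T1(V_{n,e})` is `K_2 ∨ eK_1`.
For a join `H ∨ eK_1`, the Schur complement of the block `x I_e` in `x I - A` gives
`P(x) = x^e det(x I - A_H - (e/x) J)`; hence `x P_{K_1 ∨ eK_1}(x) = x^e (x² - e)` and
`x P_{K_2 ∨ eK_1}(x) = x^e (x + 1)(x² - x - 2e)`. So the eigenvalues of `K_2 ∨ eK_1` are `0`, `-1`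
and the roots `ρ = (1 + √(1 + 8e))/2` and `1 - ρ` of `x² - x - 2e`, and its spectral radius is the
larger root `ρ`.
-/

open SimpleGraph

section Join

variable {α β : Type} (G : SimpleGraph α) (H : SimpleGraph β)

@[simp] lemma gJoin_adj_inl_inl (a b : α) : (gJoin G H).Adj (.inl a) (.inl b) ↔ G.Adj a b := by
  simp only [gJoin, gSum, compl_adj, ne_eq, exists_and_left, Sum.inl.injEq, exists_eq_left',
    reduceCtorEq, false_and, exists_false, and_self, or_false, not_and, Decidable.not_not]
  exact ⟨fun h => h.2 h.1, fun h => ⟨h.ne, fun _ => h⟩⟩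

@[simp] lemma gJoin_adj_inr_inr (a b : β) : (gJoin G H).Adj (.inr a) (.inr b) ↔ H.Adj a b := by
  simp only [gJoin, gSum, compl_adj, ne_eq, exists_and_left, Sum.inr.injEq, reduceCtorEq,
    false_and, exists_false, and_self, exists_eq_left', false_or, not_and, Decidable.not_not]
  exact ⟨fun h => h.2 h.1, fun h => ⟨h.ne, fun _ => h⟩⟩

@[simp] lemma gJoin_adj_inl_inr (a : α) (b : β) : (gJoin G H).Adj (.inl a) (.inr b) := by
  simp [gJoin, gSum]

@[simp] lemma gJoin_adj_inr_inl (a : β) (b : α) : (gJoin G H).Adj (.inr a) (.inl b) := by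
  simp [gJoin, gSum]

end Join

lemma exists_mulVec_eq_smul_iff_eval_charpoly {K V : Type*} [Field K] [Fintype V] [DecidableEq V]
    (A : Matrix V V K) (μ : K) :
    (∃ v, v ≠ 0 ∧ A *ᵥ v = μ • v) ↔ A.charpoly.eval μ = 0 := by
  rw [eval_charpoly, ← exists_mulVec_eq_zero_iff]
  refine exists_congr fun v => and_congr_right fun _ => ?_
  rw [sub_mulVec, scalar_apply, diagonal_const_mulVec, sub_eq_zero, eq_comm]

lemma specRad_eq_sSup_abs_roots {V : Type} [Fintype V] (G : SimpleGraph V) :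
    specRad G = sSup ((|·|) '' {μ | (gCharPoly G).eval μ = 0}) := by
  simp only [specRad, gCharPoly, exists_mulVec_eq_smul_iff_eval_charpoly]
  congr 1
  ext r
  simp [eq_comm]

lemma gCharPoly_congr {V W : Type} [Fintype V] [Fintype W] {G : SimpleGraph V}
    {H : SimpleGraph W} (φ : G ≃g H) : gCharPoly G = gCharPoly H := by
  rw [gCharPoly, gCharPoly, ← φ.reindex_adjMatrix (α := ℝ), charpoly_reindex]

lemma specRad_congr {V W : Type} [Fintype V] [Fintype W] {G : SimpleGraph V}
    {H : SimpleGraph W} (φ : G ≃g H) : specRad G = specRad H := by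
  rw [specRad_eq_sSup_abs_roots, specRad_eq_sSup_abs_roots, gCharPoly_congr φ]

noncomputable def rho (e : ℕ) : ℝ := (1 + √(1 + 8 * e)) / 2

lemma sq_sub_sub_eq_mul_rho (e : ℕ) (x : ℝ) :
    x ^ 2 - x - 2 * e = (x - rho e) * (x + rho e - 1) := by
  have h : √(1 + 8 * e) ^ 2 = 1 + 8 * e := Real.sq_sqrt (by positivity)
  rw [rho]
  linear_combination (1 / 4 : ℝ) * h

lemma one_le_rho (e : ℕ) : 1 ≤ rho e := by
  have : 1 ≤ √(1 + 8 * e) := Real.one_le_sqrt.mpr (by linarith [e.cast_nonneg (α := ℝ)])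
  rw [rho]
  linarith

lemma isGreatestZero_rho (e : ℕ) : IsGreatestZero (fun x : ℝ => x ^ 2 - x - 2 * e) (rho e) := by
  refine ⟨by simp [sq_sub_sub_eq_mul_rho], fun x hx => ?_⟩
  rcases mul_eq_zero.mp ((sq_sub_sub_eq_mul_rho e x).symm.trans hx) with h | h <;>
    linarith [one_le_rho e]

lemma eval_gCharPoly {V : Type} [Fintype V] [DecidableEq V] (G : SimpleGraph V) (x : ℝ) :
    (gCharPoly G).eval x = (scalar V x - G.adjMatrix ℝ).det := by
  rw [gCharPoly]
  convert eval_charpoly _ _ using 3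
  ext i j
  simp [diagonal_apply]

lemma eval_gCharPoly_gJoin_bot {W : Type} [Fintype W] [DecidableEq W] (H : SimpleGraph W)
    (e : ℕ) {x : ℝ} (hx : x ≠ 0) :
    (gCharPoly (gJoin H (⊥ : SimpleGraph (Fin e)))).eval x =
      x ^ e * (scalar W x - H.adjMatrix ℝ - of fun _ _ => (e : ℝ) / x).det := by
  have hblocks : scalar (W ⊕ Fin e) x - (gJoin H ⊥).adjMatrix ℝ =
      fromBlocks (scalar W x - H.adjMatrix ℝ) (of fun _ _ => -1) (of fun _ _ => -1)
        (scalar (Fin e) x) := by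
    ext (i | i) (j | j) <;> simp [adjMatrix_apply, diagonal_apply]
  have hright : scalar (Fin e) x * scalar (Fin e) x⁻¹ = 1 := by
    rw [← map_mul, mul_inv_cancel₀ hx, map_one]
  let := invertibleOfRightInverse _ _ hright
  have hschur : (of fun _ _ => -1 : Matrix W (Fin e) ℝ) * ⅟(scalar (Fin e) x) *
      (of fun _ _ => -1 : Matrix (Fin e) W ℝ) = of fun _ _ => (e : ℝ) / x := by
    rw [invOf_eq_right_inv hright]
    ext i j
    simp [mul_apply, diagonal_apply, div_eq_mul_inv]
  rw [eval_gCharPoly, hblocks, det_fromBlocks₂₂, hschur, scalar_apply, det_diagonal,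
    Finset.prod_const, Finset.card_fin]

lemma mul_eval_gCharPoly_gJoin_top_one_bot (e : ℕ) {x : ℝ} (hx : x ≠ 0) :
    x * (gCharPoly (gJoin (⊤ : SimpleGraph (Fin 1)) (⊥ : SimpleGraph (Fin e)))).eval x =
      x ^ e * (x ^ 2 - e) := by
  rw [eval_gCharPoly_gJoin_bot _ _ hx, det_fin_one]
  simp only [scalar_apply, Matrix.sub_apply, diagonal_apply_eq, adjMatrix_apply,
    SimpleGraph.irrefl, if_false, sub_zero, of_apply]
  field_simp

lemma mul_eval_gCharPoly_gJoin_top_two_bot (e : ℕ) {x : ℝ} (hx : x ≠ 0) :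
    x * (gCharPoly (gJoin (⊤ : SimpleGraph (Fin 2)) (⊥ : SimpleGraph (Fin e)))).eval x =
      x ^ e * ((x + 1) * (x ^ 2 - x - 2 * e)) := by
  rw [eval_gCharPoly_gJoin_bot _ _ hx, det_fin_two]
  simp only [scalar_apply, Matrix.sub_apply, diagonal_apply_eq, diagonal_apply_ne, adjMatrix_apply,
    SimpleGraph.irrefl, top_adj, if_false, if_true, sub_zero, zero_sub, of_apply, ne_eq,
    zero_ne_one, one_ne_zero, not_false_eq_true]
  field_simp
  ring

lemma specRad_gJoin_top_two_bot (e : ℕ) :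
    specRad (gJoin (⊤ : SimpleGraph (Fin 2)) (⊥ : SimpleGraph (Fin e))) = rho e := by
  have hρ := one_le_rho e
  have hρ0 : 0 < rho e := by linarith
  have hroots : ∀ μ ≠ 0,
      (gCharPoly (gJoin (⊤ : SimpleGraph (Fin 2)) (⊥ : SimpleGraph (Fin e)))).eval μ = 0 ↔
        (μ + 1) * ((μ - rho e) * (μ + rho e - 1)) = 0 := fun μ hμ => by
    rw [← sq_sub_sub_eq_mul_rho, ← mul_right_inj' hμ,
      mul_eval_gCharPoly_gJoin_top_two_bot e hμ, mul_zero,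
      mul_eq_zero_iff_left (pow_ne_zero e hμ)]
  rw [specRad_eq_sSup_abs_roots]
  refine IsGreatest.csSup_eq
    ⟨⟨rho e, (hroots _ hρ0.ne').mpr (by ring), abs_of_pos hρ0⟩, ?_⟩
  rintro _ ⟨μ, hμ, rfl⟩
  rcases eq_or_ne μ 0 with rfl | hμ0
  · simpa using hρ0.le
  obtain h | h | h : μ + 1 = 0 ∨ μ - rho e = 0 ∨ μ + rho e - 1 = 0 := by
    simpa using (hroots μ hμ0).mp hμ
  all_goals rw [abs_le]; constructor <;> linarith

lemma nonempty_iso_gJoin_top_bot {m : ℕ} (k e : ℕ) (hm : m = k + e) (G : SimpleGraph (Fin m))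
    (hG : ∀ i j : Fin m, G.Adj i j ↔ i ≠ j ∧ ((i : ℕ) < k ∨ (j : ℕ) < k)) :
    Nonempty (G ≃g gJoin (⊤ : SimpleGraph (Fin k)) (⊥ : SimpleGraph (Fin e))) := by
  subst hm
  refine ⟨(RelIso.mk finSumFinEquiv fun {x y} => ?_).symm⟩
  rcases x with a | a <;> rcases y with b | b <;> simp [hG, Fin.ext_iff] <;> omega

section graphV

variable {n e : ℕ}

lemma graphV_adj (i j : Fin n) :
    (graphV n e).Adj i j ↔ i ≠ j ∧ ((i : ℕ) = 0 ∨ (j : ℕ) = 0 ∨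
      ((i : ℕ) = 1 ∧ 2 ≤ (j : ℕ) ∧ (j : ℕ) ≤ e + 1) ∨
      ((j : ℕ) = 1 ∧ 2 ≤ (i : ℕ) ∧ (i : ℕ) ≤ e + 1)) := by
  rw [graphV, fromRel_adj]
  tauto

lemma sIdx_graphV (he : 1 ≤ e) (hn : e + 2 ≤ n) : sIdx (graphV n e) = e + 1 := by
  have he0 : e ≠ 0 := by omega
  rw [sIdx, Nat.findGreatest_eq_iff]
  refine ⟨by omega, fun _ => ⟨by omega, ?_⟩, ?_⟩
  · calc 2 = ({⟨0, by omega⟩, ⟨1, by omega⟩} : Set (Fin n)).ncard := by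
          rw [Set.ncard_pair (by simp)]
      _ ≤ _ := Set.ncard_le_ncard (by rintro j (rfl | rfl) <;> simp [graphV_adj, he, he0])
  · rintro k hk - ⟨hkn, hdeg⟩
    have hsub : (graphV n e).neighborSet ⟨k, hkn⟩ ⊆ {⟨0, by omega⟩} := by
      intro j hj
      simp only [mem_neighborSet, graphV_adj, Set.mem_singleton_iff, Fin.ext_iff] at hj ⊢
      omega
    have := Set.ncard_le_ncard hsub
    rw [Set.ncard_singleton] at this
    omega

lemma Tgraph_graphV_adj (he : 1 ≤ e) (hn : e + 2 ≤ n) (i j : Fin (sIdx (graphV n e))) :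
    (Tgraph (graphV n e)).Adj i j ↔ i ≠ j ∧ ((i : ℕ) < 1 ∨ (j : ℕ) < 1) := by
  have hs := sIdx_graphV he hn
  have hi := i.isLt
  have hj := j.isLt
  rw [Tgraph, comap_adj, graphV_adj]
  simp only [ne_eq, Fin.ext_iff]
  omega

lemma T1graph_graphV_adj (he : 1 ≤ e) (hn : e + 2 ≤ n) (i j : Fin (sIdx (graphV n e) + 1)) :
    (T1graph (graphV n e)).Adj i j ↔ i ≠ j ∧ ((i : ℕ) < 2 ∨ (j : ℕ) < 2) := by
  have hs := sIdx_graphV he hn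
  have hi := i.isLt
  have hj := j.isLt
  rw [T1graph, dif_pos (by omega), comap_adj, graphV_adj]
  simp only [ne_eq, Fin.ext_iff, Nat.mod_eq_of_lt (by omega : (i : ℕ) < n),
    Nat.mod_eq_of_lt (by omega : (j : ℕ) < n)]
  omega

end graphV

theorem stmt_10 (e n : ℕ) (he : 1 ≤ e) (hn : e + 2 ≤ n) :
    Nonempty (Tgraph (graphV n e) ≃g
      gJoin (⊤ : SimpleGraph (Fin 1)) (⊥ : SimpleGraph (Fin e))) ∧
    Nonempty (T1graph (graphV n e) ≃g
      gJoin (⊤ : SimpleGraph (Fin 2)) (⊥ : SimpleGraph (Fin e))) ∧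
    (∀ x : ℝ, specRad (T1graph (graphV n e)) ≤ x →
      Rfun (graphV n e) x =
        x * (x + 1) * (x ^ 2 - x - 2 * (e : ℝ)) / (x ^ 2 - (e : ℝ))) ∧
    IsGreatestZero (fun x : ℝ => x ^ 2 - x - 2 * (e : ℝ))
      (specRad (T1graph (graphV n e))) := by
  have hs := sIdx_graphV he hn
  obtain ⟨φ⟩ := nonempty_iso_gJoin_top_bot 1 e (by omega) _ (Tgraph_graphV_adj he hn)
  obtain ⟨ψ⟩ := nonempty_iso_gJoin_top_bot 2 e (by omega) _ (T1graph_graphV_adj he hn)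
  have hρ : specRad (T1graph (graphV n e)) = rho e := by
    rw [specRad_congr ψ, specRad_gJoin_top_two_bot]
  refine ⟨⟨φ⟩, ⟨ψ⟩, fun x hx => ?_, hρ ▸ isGreatestZero_rho e⟩
  have hx0 : x ≠ 0 := by linarith [one_le_rho e]
  -- multiply numerator and denominator by `x`, then cancel `x ^ e`
  rw [Rfun, gCharPoly_congr φ, gCharPoly_congr ψ, ← mul_div_mul_left _ _ hx0, mul_left_comm,
    mul_eval_gCharPoly_gJoin_top_one_bot e hx0, mul_eval_gCharPoly_gJoin_top_two_bot e hx0,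
    mul_left_comm, mul_div_mul_left _ _ (pow_ne_zero e hx0)]
  ring
end

section
/- For every integer e ≥ 28, the function λ ↦ Ψ_e(λ) is strictly increasing on the interval [k_e, ∞). -/
open Polynomial Matrix

attribute [local instance] Classical.propDecidable

/-!
`Ψ_e` is a cubic `a x³ - b x² - c x + d` with `a ≥ 0`, so its derivative is the convex quadratic
`Ψ'(x) = Ψ'(k) + Ψ''(k) (x - k) + 3 a (x - k)²`; it therefore suffices that `Ψ'(k) > 0` and
`Ψ''(k) ≥ 0`. Both are polynomial inequalities in `k ≥ 8` and `0 ≤ t ≤ k - 1`: after substituting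
`k = u + 8`, every monomial with a negative coefficient is absorbed by `t (u + 7 - t) ≥ 0`.
-/

lemma kk_mul_pred_le (e : ℕ) : kk e * (kk e - 1) ≤ 2 * e :=
  Nat.findGreatest_spec (P := fun k => k * (k - 1) ≤ 2 * e) (m := 1) (by omega) (by simp)

lemma kk_le (e : ℕ) : kk e ≤ e + 1 := by
  by_contra! h
  have hk : kk e = e + 2 := le_antisymm (Nat.findGreatest_le _) h
  have : (e + 2) * (e + 1) ≤ 2 * e := by simpa [hk] using kk_mul_pred_le e
  nlinarith

lemma two_mul_lt_kk_succ_mul (e : ℕ) : 2 * e < (kk e + 1) * kk e := by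
  have h := Nat.findGreatest_is_greatest (P := fun k => k * (k - 1) ≤ 2 * e)
    (Nat.lt_succ_self (kk e)) (by have := kk_le e; omega)
  simpa using h

lemma tt_lt_kk (e : ℕ) : tt e < kk e := by
  have hle := kk_mul_pred_le e
  have hlt := two_mul_lt_kk_succ_mul e
  obtain ⟨m, hm⟩ := Nat.even_mul_pred_self (kk e)
  have hsucc : (kk e + 1) * kk e = kk e * (kk e - 1) + 2 * kk e := by
    cases kk e
    · rfl
    · simp only [Nat.add_sub_cancel]; ring
  unfold tt
  omega

lemma eight_le_kk {e : ℕ} (he : 28 ≤ e) : 8 ≤ kk e :=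
  Nat.le_findGreatest (by omega) (by omega)

lemma strictMonoOn_eval_cubic {a b c d r : ℝ} (ha : 0 ≤ a) (hb : b ≤ 3 * a * r)
    (hr : 0 < 3 * a * r ^ 2 - 2 * b * r - c) :
    StrictMonoOn (fun x => (C a * X ^ 3 - C b * X ^ 2 - C c * X + C d).eval x) (Set.Ici r) := by
  refine strictMonoOn_of_deriv_pos (convex_Ici r) (Polynomial.continuousOn _) fun x hx => ?_
  rw [interior_Ici] at hx
  have hderiv : deriv (fun x => (C a * X ^ 3 - C b * X ^ 2 - C c * X + C d).eval x) x
      = (3 * a * r ^ 2 - 2 * b * r - c) + 2 * (3 * a * r - b) * (x - r) + 3 * a * (x - r) ^ 2 := by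
    rw [Polynomial.deriv]
    simp only [derivative_add, derivative_sub, derivative_C_mul, derivative_X_pow, derivative_X,
      derivative_C, eval_add, eval_sub, eval_mul, eval_C, eval_pow, eval_X, eval_one,
      eval_zero]
    ring
  rw [hderiv]
  have hxr : 0 < x - r := sub_pos.2 hx
  nlinarith [mul_nonneg (sub_nonneg.2 hb) hxr.le, mul_nonneg ha (sq_nonneg (x - r))]

section PsiCoefficients

variable {k t : ℝ}

lemma psi_lead_nonneg (hk : 3 ≤ k) (ht : 0 ≤ t) :
    0 ≤ (k - 1) * (k - 2) * (k ^ 2 - 3 * k + 4 * t) := by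
  have : 0 ≤ k ^ 2 - 3 * k + 4 * t := by nlinarith
  have : 0 ≤ (k - 1) * (k - 2) := by nlinarith
  positivity

lemma psi_second_deriv_nonneg (hk : 8 ≤ k) (ht : 0 ≤ t) (htk : t + 1 ≤ k) :
    k ^ 5 - 6 * k ^ 4 + k ^ 3 * (4 * t + 15) - k ^ 2 * (20 * t + 18)
        + k * (8 * t ^ 2 + 24 * t + 8) - (4 * t ^ 2 + 12 * t)
      ≤ 3 * ((k - 1) * (k - 2) * (k ^ 2 - 3 * k + 4 * t)) * k := by
  obtain ⟨u, hu, rfl⟩ : ∃ u, 0 ≤ u ∧ k = u + 8 := ⟨k - 8, by linarith, by ring⟩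
  have hs : 0 ≤ t * (u + 7 - t) := mul_nonneg ht (by linarith)
  nlinarith [mul_nonneg hu hs, mul_nonneg hu ht, mul_nonneg (mul_nonneg hu hu) ht,
    mul_nonneg (pow_nonneg hu 3) ht, pow_nonneg hu 3, pow_nonneg hu 4, pow_nonneg hu 5]

lemma psi_deriv_at_k_pos (hk : 8 ≤ k) (ht : 0 ≤ t) (htk : t + 1 ≤ k) :
    0 < 3 * ((k - 1) * (k - 2) * (k ^ 2 - 3 * k + 4 * t)) * k ^ 2
      - 2 * (k ^ 5 - 6 * k ^ 4 + k ^ 3 * (4 * t + 15) - k ^ 2 * (20 * t + 18)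
          + k * (8 * t ^ 2 + 24 * t + 8) - (4 * t ^ 2 + 12 * t)) * k
      - (k ^ 2 - k + 2 * t) * (k ^ 3 + k ^ 2 * (t - 4) - k * (3 * t - 5)
          + (4 * t ^ 2 - 2 * t - 2)) := by
  obtain ⟨u, hu, rfl⟩ : ∃ u, 0 ≤ u ∧ k = u + 8 := ⟨k - 8, by linarith, by ring⟩
  have hs : 0 ≤ t * (u + 7 - t) := mul_nonneg ht (by linarith)
  nlinarith [mul_nonneg hu hs, mul_nonneg (mul_nonneg hu hu) hs, mul_nonneg ht hs,
    mul_nonneg (mul_nonneg hu ht) hs, mul_nonneg hu ht, mul_nonneg (mul_nonneg hu hu) ht,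
    mul_nonneg (pow_nonneg hu 3) ht, mul_nonneg (pow_nonneg hu 4) ht,
    pow_nonneg hu 3, pow_nonneg hu 4, pow_nonneg hu 5, pow_nonneg hu 6]

end PsiCoefficients

theorem stmt_16 (e : ℕ) (he : 28 ≤ e) :
    StrictMonoOn (fun x : ℝ => (PsiPoly e).eval x) (Set.Ici (kk e : ℝ)) := by
  have hk : (8 : ℝ) ≤ kk e := by exact_mod_cast eight_le_kk he
  have ht : (0 : ℝ) ≤ tt e := Nat.cast_nonneg _
  have htk : (tt e : ℝ) + 1 ≤ kk e := by exact_mod_cast tt_lt_kk e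
  exact strictMonoOn_eval_cubic (psi_lead_nonneg (by linarith) ht)
    (psi_second_deriv_nonneg hk ht htk) (psi_deriv_at_k_pos hk ht htk)
end
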